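/- arXiv:2405.01766 — 3 statements merged into one kernel-verified Lean document; each statement's English description precedes it below -/
import Mathlib

section
/- Let D be a positive integer, let D < q ≤ ∞, and let I be an infinite set. For each i ∈ I and d ∈ {1,…,D} let a_{i,d} = (a_{i,d,j})_{j=1}^∞ ∈ ℓ^{q/(q−d)}, and let P_i(x) = ∑_{k=1}^D ∑_{(d_1,…,d_k) ∈ D_k} (a_{i,d_1}, x^{d_1})(a_{i,d_2}, x^{d_2})⋯(a_{i,d_k}, x^{d_k}) be the associated multiplicative polynomial, where (a_{i,d}, x^d) = ∑_{j=1}^∞ a_{i,d,j} x_j^d. Let M > 0 and let (b_i)_{i∈I} be scalars. If for every ε > 0 and every finite subset S of I the finite set of polynomial inequalities {|P_i(x) − b_i| ≤ ε : i ∈ S} has a solution x_{S,ε} ∈ ℓ^q with ‖x_{S,ε}‖_q ≤ M, then the infinite set of polynomial equations {P_i(x) = b_i : i ∈ I} has an exact solution x ∈ ℓ^q with ‖x‖_q ≤ M. -/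
open scoped ENNReal

/-- The exponent `q/(q-d)`, interpreted as `1` when `q = ∞`, so that `q/(q-d)` and
`q/d` form a Hölder conjugate pair whenever `d < q`. -/
noncomputable def holderExponent (q : ℝ≥0∞) (d : ℕ) : ℝ≥0∞ :=
  if q = ∞ then 1 else q / (q - d)

/-- `𝒟_k`: the (finite) set of `k`-tuples `(d_1, …, d_k)` of positive integers with
`d_1 + ⋯ + d_k ≤ D`. -/
def degreeTuples (D k : ℕ) : Finset (Fin k → ℕ) :=
  (Fintype.piFinset fun _ => Finset.Icc 1 D).filter fun Δ => ∑ l, Δ l ≤ D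

/-- The multiplicative polynomial of degree at most `D` determined by the sequences
`a d = (a d j)_j`, `d ∈ {1, …, D}`:
`P(x) = ∑_{k=1}^D ∑_{(d_1,…,d_k) ∈ 𝒟_k} (a_{d_1}, x^{d_1}) ⋯ (a_{d_k}, x^{d_k})`
where `(a_d, x^d) = ∑' j, a d j * x j ^ d`. -/
noncomputable def mulPoly {𝕜 : Type*} [RCLike 𝕜] (D : ℕ) (a : ℕ → ℕ → 𝕜) (x : ℕ → 𝕜) : 𝕜 :=
  ∑ k ∈ Finset.Icc 1 D, ∑ Δ ∈ degreeTuples D k,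
    ∏ l : Fin k, ∑' j : ℕ, a (Δ l) j * x j ^ (Δ l)

/-!
The ball `‖x‖_q ≤ M` of `ℓ^q`, viewed inside `ℕ → 𝕜` with the product topology, is compact by
Tychonoff. On it every pairing `x ↦ (a, x^d)` is continuous: by Hölder's inequality with the
exponents `q/(q-d)` and `q/d`, the tail `∑_{j ≥ N} |a_j| |x_j|^d` is at most
`‖(a_j)_{j ≥ N}‖_{q/(q-d)} M^d`, uniformly on the ball, so the partial sums converge uniformly.
Hence every `P_i` is continuous on the ball, the sets `{x : |P_i(x) - b_i| ≤ 1/(n+1)}` are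
closed subsets of a compact set with the finite intersection property, and a common point of all
of them solves the whole system.
-/

open Filter Topology

section LpClosedBall

variable {α E : Type*} [NormedAddCommGroup E] {q : ℝ≥0∞} {M : ℝ}

/-- The closed ball of radius `M` of `ℓ^q(α, E)`, described by conditions that are closed in the
product topology of `α → E`. -/
def lpClosedBall (α E : Type*) [NormedAddCommGroup E] (q : ℝ≥0∞) (M : ℝ) : Set (α → E) :=
  {x | (∀ j, ‖x j‖ ≤ M) ∧ (q ≠ ∞ → ∀ s : Finset α, ∑ j ∈ s, ‖x j‖ ^ q.toReal ≤ M ^ q.toReal)}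

theorem isClosed_lpClosedBall : IsClosed (lpClosedBall α E q M) := by
  have hnorm : IsClosed {x : α → E | ∀ j, ‖x j‖ ≤ M} := by
    simpa only [Set.ofPred_forall] using
      isClosed_iInter fun j => isClosed_le (continuous_apply j).norm continuous_const
  rcases eq_or_ne q ∞ with rfl | hq
  · simpa [lpClosedBall] using hnorm
  have hsum (s : Finset α) : Continuous fun x : α → E => ∑ j ∈ s, ‖x j‖ ^ q.toReal :=
    continuous_finsetSum s fun j _ =>
      (continuous_apply j).norm.rpow_const fun _ => Or.inr ENNReal.toReal_nonneg
  simpa only [lpClosedBall, hq, ne_eq, not_false_eq_true, forall_const, Set.ofPred_and,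
    Set.ofPred_forall] using
    hnorm.inter (isClosed_iInter fun s => isClosed_le (hsum s) continuous_const)

theorem isCompact_lpClosedBall [ProperSpace E] : IsCompact (lpClosedBall α E q M) :=
  (isCompact_univ_pi fun _ => isCompact_closedBall (0 : E) M).of_isClosed_subset
    isClosed_lpClosedBall fun x hx => Set.mem_univ_pi.2 fun j => by simpa using hx.1 j

theorem coe_mem_lpClosedBall (hq : q ≠ 0) {y : lp (fun _ : α => E) q} (hy : ‖y‖ ≤ M) :
    ⇑y ∈ lpClosedBall α E q M :=
  ⟨fun j => (lp.norm_apply_le_norm hq y j).trans hy, fun hq' s =>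
    have hr : 0 < q.toReal := ENNReal.toReal_pos hq hq'
    (lp.sum_rpow_le_norm_rpow hr y s).trans (by gcongr; exact lp.norm_nonneg' y)⟩

theorem exists_lp_of_mem_lpClosedBall (hq : q ≠ 0) (hM : 0 ≤ M) {x : α → E}
    (hx : x ∈ lpClosedBall α E q M) : ∃ y : lp (fun _ : α => E) q, ‖y‖ ≤ M ∧ ⇑y = x := by
  rcases eq_or_ne q ∞ with rfl | hq'
  · exact ⟨⟨x, memℓp_infty ⟨M, Set.forall_mem_range.2 hx.1⟩⟩,
      lp.norm_le_of_forall_le hM hx.1, rfl⟩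
  · exact ⟨⟨x, memℓp_gen' (hx.2 hq')⟩,
      lp.norm_le_of_forall_sum_le (ENNReal.toReal_pos hq hq') hM (hx.2 hq'), rfl⟩

theorem shift_mem_lpClosedBall {x : ℕ → E} (hx : x ∈ lpClosedBall ℕ E q M) (N : ℕ) :
    (fun j => x (j + N)) ∈ lpClosedBall ℕ E q M :=
  ⟨fun j => hx.1 _, fun hq' s => by
    simpa [Finset.sum_map] using hx.2 hq' (s.map (addRightEmbedding N))⟩

end LpClosedBall

theorem holderExponent_top (d : ℕ) : holderExponent ∞ d = 1 := if_pos rfl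

theorem holderConjugate_holderExponent {q : ℝ≥0∞} {d : ℕ} (hd : 0 < d) (hdq : (d : ℝ≥0∞) < q)
    (hq : q ≠ ∞) : (holderExponent q d).toReal.HolderConjugate (q.toReal / d) := by
  have hd' : (0 : ℝ) < d := by exact_mod_cast hd
  have hdr : (d : ℝ) < q.toReal := by
    simpa using (ENNReal.toReal_lt_toReal (by simp) hq).2 hdq
  rw [holderExponent, if_neg hq, ENNReal.toReal_div, ENNReal.toReal_sub_of_le hdq.le hq,
    ENNReal.toReal_natCast, Real.holderConjugate_iff]
  refine ⟨(one_lt_div (by linarith)).2 (by linarith), ?_⟩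
  have hr : q.toReal ≠ 0 := by linarith
  field_simp
  ring

theorem holderExponent_toReal_pos {q : ℝ≥0∞} {d : ℕ} (hd : 0 < d) (hdq : (d : ℝ≥0∞) < q) :
    0 < (holderExponent q d).toReal := by
  rcases eq_or_ne q ∞ with rfl | hq
  · simp [holderExponent_top]
  · exact (holderConjugate_holderExponent hd hdq hq).pos

theorem Real.summable_and_tsum_mul_pow_le {ι : Type*} {f g : ι → ℝ} {p r M : ℝ} {d : ℕ}
    (hpr : p.HolderConjugate (r / d)) (hf : ∀ i, 0 ≤ f i) (hg : ∀ i, 0 ≤ g i) (hM : 0 ≤ M)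
    (hfp : Summable fun i => f i ^ p) (hgr : Summable fun i => g i ^ r)
    (hgM : ∑' i, g i ^ r ≤ M ^ r) :
    (Summable fun i => f i * g i ^ d) ∧
      ∑' i, f i * g i ^ d ≤ (∑' i, f i ^ p) ^ (1 / p) * M ^ d := by
  have hd : (0 : ℝ) < d :=
    Nat.cast_pos.2 (Nat.pos_of_ne_zero fun h => by simpa [h] using hpr.symm.pos.ne')
  have hr : 0 < r := (div_pos_iff_of_pos_right hd).1 hpr.symm.pos
  have hpow (i : ι) : (g i ^ (d : ℝ)) ^ (r / d) = g i ^ r := by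
    rw [← Real.rpow_mul (hg i), mul_div_cancel₀ _ hd.ne']
  obtain ⟨hsum, hle⟩ := Real.summable_and_inner_le_Lp_mul_Lq_tsum_of_nonneg hpr hf
    (fun i => Real.rpow_nonneg (hg i) d) hfp (by simpa only [hpow] using hgr)
  simp only [hpow] at hle
  simp only [Real.rpow_natCast] at hsum hle
  refine ⟨hsum, hle.trans (mul_le_mul_of_nonneg_left ?_
    (Real.rpow_nonneg (tsum_nonneg fun i => Real.rpow_nonneg (hf i) p) _))⟩
  calc (∑' i, g i ^ r) ^ (1 / (r / d)) ≤ (M ^ r) ^ (1 / (r / d)) := by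
        gcongr
        exact tsum_nonneg fun i => Real.rpow_nonneg (hg i) r
    _ = M ^ d := by
      rw [← Real.rpow_mul hM, one_div_div, mul_div_cancel₀ _ hr.ne', Real.rpow_natCast]

theorem summable_and_tsum_mul_pow_le_of_mem_lpClosedBall {E F : Type*} [NormedAddCommGroup E]
    [NormedAddCommGroup F] {q : ℝ≥0∞} {d : ℕ} {M : ℝ} (hd : 0 < d) (hdq : (d : ℝ≥0∞) < q)
    {a : ℕ → F} (ha : Summable fun j => ‖a j‖ ^ (holderExponent q d).toReal)
    {x : ℕ → E} (hx : x ∈ lpClosedBall ℕ E q M) :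
    (Summable fun j => ‖a j‖ * ‖x j‖ ^ d) ∧ ∑' j, ‖a j‖ * ‖x j‖ ^ d ≤
      (∑' j, ‖a j‖ ^ (holderExponent q d).toReal) ^ (1 / (holderExponent q d).toReal) * M ^ d := by
  have hM : 0 ≤ M := (norm_nonneg _).trans (hx.1 0)
  rcases eq_or_ne q ∞ with rfl | hq
  · simp only [holderExponent_top, ENNReal.toReal_one, Real.rpow_one, div_one] at ha ⊢
    have hle (j : ℕ) : ‖a j‖ * ‖x j‖ ^ d ≤ ‖a j‖ * M ^ d := by gcongr; exact hx.1 j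
    have hs := Summable.of_nonneg_of_le (fun j => by positivity) hle (ha.mul_right _)
    exact ⟨hs, (hs.tsum_le_tsum hle (ha.mul_right _)).trans_eq tsum_mul_right⟩
  · have hxs : Summable fun j => ‖x j‖ ^ q.toReal :=
      summable_of_sum_le (fun j => by positivity) (hx.2 hq)
    exact Real.summable_and_tsum_mul_pow_le (holderConjugate_holderExponent hd hdq hq)
      (fun _ => norm_nonneg _) (fun _ => norm_nonneg _) hM ha hxs
      (hxs.tsum_le_of_sum_le (hx.2 hq))

theorem continuousOn_tsum_mul_pow {𝕜 : Type*} [NormedField 𝕜] [CompleteSpace 𝕜] {q : ℝ≥0∞}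
    {d : ℕ} {M : ℝ} (hd : 0 < d) (hdq : (d : ℝ≥0∞) < q) {a : ℕ → 𝕜}
    (ha : Memℓp a (holderExponent q d)) :
    ContinuousOn (fun x : ℕ → 𝕜 => ∑' j, a j * x j ^ d) (lpClosedBall ℕ 𝕜 q M) := by
  set p := (holderExponent q d).toReal
  have hp : 0 < p := holderExponent_toReal_pos hd hdq
  have has : Summable fun j => ‖a j‖ ^ p := ha.summable hp
  -- the tail beyond `N` is a tail of `a` paired with a point of the ball, since the ball is
  -- shift-invariant
  have htail : ∀ x ∈ lpClosedBall ℕ 𝕜 q M, ∀ N : ℕ,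
      ‖∑' j, a j * x j ^ d - ∑ j ∈ Finset.range N, a j * x j ^ d‖ ≤
        (∑' j, ‖a (j + N)‖ ^ p) ^ (1 / p) * M ^ d := by
    intro x hx N
    have hsum : Summable fun j => a j * x j ^ d := .of_norm <| by
      simpa only [norm_mul, norm_pow] using
        (summable_and_tsum_mul_pow_le_of_mem_lpClosedBall hd hdq has hx).1
    obtain ⟨hs, hle⟩ := summable_and_tsum_mul_pow_le_of_mem_lpClosedBall hd hdq
      ((summable_nat_add_iff N).2 has) (shift_mem_lpClosedBall hx N)
    rw [← hsum.sum_add_tsum_nat_add N, add_sub_cancel_left]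
    exact (norm_tsum_le_tsum_norm (by simpa only [norm_mul, norm_pow] using hs)).trans
      (by simpa only [norm_mul, norm_pow] using hle)
  have hlim : Tendsto (fun N => (∑' j, ‖a (j + N)‖ ^ p) ^ (1 / p) * M ^ d) atTop (𝓝 0) := by
    have := ((tendsto_sum_nat_add fun j => ‖a j‖ ^ p).rpow_const (p := 1 / p)
      (Or.inr (by positivity))).mul_const (M ^ d)
    rwa [Real.zero_rpow (one_div_pos.2 hp).ne', zero_mul] at this
  refine TendstoUniformlyOn.continuousOn (F := fun N x => ∑ j ∈ Finset.range N, a j * x j ^ d)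
    (p := atTop) ?_
    (Eventually.of_forall fun N => (by fun_prop : Continuous _).continuousOn).frequently
  rw [Metric.tendstoUniformlyOn_iff]
  intro ε hε
  filter_upwards [hlim.eventually_lt_const hε] with N hN x hx
  rw [dist_eq_norm]
  exact (htail x hx N).trans_lt hN

theorem continuousOn_mulPoly {𝕜 : Type*} [RCLike 𝕜] {D : ℕ} {q : ℝ≥0∞} {M : ℝ}
    (hq : (D : ℝ≥0∞) < q) {a : ℕ → ℕ → 𝕜}
    (ha : ∀ d ∈ Finset.Icc 1 D, Memℓp (a d) (holderExponent q d)) :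
    ContinuousOn (mulPoly D a) (lpClosedBall ℕ 𝕜 q M) := by
  refine continuousOn_finsetSum _ fun k _ => continuousOn_finsetSum _ fun Δ hΔ =>
    continuousOn_finsetProd _ fun l _ => ?_
  have hΔl : Δ l ∈ Finset.Icc 1 D := Fintype.mem_piFinset.1 (Finset.mem_filter.1 hΔ).1 l
  exact continuousOn_tsum_mul_pow (Finset.mem_Icc.1 hΔl).1
    (lt_of_le_of_lt (Nat.cast_le.2 (Finset.mem_Icc.1 hΔl).2) hq) (ha _ hΔl)

theorem IsCompact.exists_forall_nonpos_of_forall_exists_le {X I : Type*} [TopologicalSpace X]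
    [T2Space X] {K : Set X} (hK : IsCompact K) {F : I → X → ℝ} (hF : ∀ i, ContinuousOn (F i) K)
    (happrox : ∀ ε > 0, ∀ S : Finset I, ∃ x ∈ K, ∀ i ∈ S, F i x ≤ ε) :
    ∃ x ∈ K, ∀ i, F i x ≤ 0 := by
  classical
  let C : I × ℕ → Set X := fun p => K ∩ F p.1 ⁻¹' Set.Iic (1 / (p.2 + 1))
  have hC (p : I × ℕ) : IsClosed (C p) :=
    (hF p.1).preimage_isClosed_of_isClosed hK.isClosed isClosed_Iic
  have hfip (u : Finset (I × ℕ)) : (K ∩ ⋂ p ∈ u, C p).Nonempty := by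
    obtain ⟨x, hxK, hx⟩ := happrox (1 / (u.sup Prod.snd + 1)) (by positivity) (u.image Prod.fst)
    refine ⟨x, hxK, Set.mem_iInter₂.2 fun p hp =>
      ⟨hxK, (hx p.1 (Finset.mem_image_of_mem _ hp)).trans ?_⟩⟩
    gcongr
    exact_mod_cast Finset.le_sup (f := Prod.snd) hp
  obtain ⟨x, hxK, hx⟩ := hK.inter_iInter_nonempty C hC hfip
  exact ⟨x, hxK, fun i => ge_of_tendsto' tendsto_one_div_add_atTop_nhds_zero_nat
    fun n => (Set.mem_iInter.1 hx (i, n)).2⟩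

theorem multiplicative_approx_implies_exact_general {𝕜 : Type*} [RCLike 𝕜]
    (D : ℕ) (q : ℝ≥0∞) (hq : (D : ℝ≥0∞) < q)
    (I : Type*)
    (a : I → ℕ → ℕ → 𝕜)
    (ha : ∀ i, ∀ d ∈ Finset.Icc 1 D, Memℓp (a i d) (holderExponent q d))
    (b : I → 𝕜) (M : ℝ)
    (hfin : ∀ (ε : ℝ), 0 < ε → ∀ S : Finset I,
      ∃ x : lp (fun _ : ℕ => 𝕜) q,
        ‖x‖ ≤ M ∧ ∀ i ∈ S, ‖mulPoly D (a i) (fun j => x j) - b i‖ ≤ ε) :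
    ∃ x : lp (fun _ : ℕ => 𝕜) q,
      ‖x‖ ≤ M ∧ ∀ i : I, mulPoly D (a i) (fun j => x j) = b i := by
  have hq0 : q ≠ 0 := (zero_le.trans_lt hq).ne'
  have happrox : ∀ ε > 0, ∀ S : Finset I, ∃ x ∈ lpClosedBall ℕ 𝕜 q M,
      ∀ i ∈ S, ‖mulPoly D (a i) x - b i‖ ≤ ε := fun ε hε S =>
    let ⟨y, hy, hyS⟩ := hfin ε hε S
    ⟨y, coe_mem_lpClosedBall hq0 hy, hyS⟩
  obtain ⟨x, hxK, hx⟩ := isCompact_lpClosedBall.exists_forall_nonpos_of_forall_exists_le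
    (fun i => ((continuousOn_mulPoly hq (ha i)).sub continuousOn_const).norm) happrox
  obtain ⟨y, hy, rfl⟩ := exists_lp_of_mem_lpClosedBall hq0 ((norm_nonneg _).trans (hxK.1 0)) hxK
  exact ⟨y, hy, fun i => sub_eq_zero.1 (norm_le_zero_iff.1 (hx i))⟩

/-- **Main theorem.** If for every `ε > 0` and every finite `S ⊆ I` the polynomial
inequalities `{‖P_i(x) - b_i‖ ≤ ε : i ∈ S}` have a solution `x ∈ ℓ^q` with
`‖x‖_q ≤ M`, then the infinite system of multiplicative polynomial equations
`{P_i(x) = b_i : i ∈ I}` has an exact solution `x ∈ ℓ^q` with `‖x‖_q ≤ M`. -/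
theorem multiplicative_approx_implies_exact {𝕜 : Type*} [RCLike 𝕜]
    (D : ℕ) (hD : 0 < D) (q : ℝ≥0∞) (hq : (D : ℝ≥0∞) < q)
    (I : Type*) [Infinite I]
    (a : I → ℕ → ℕ → 𝕜)
    (ha : ∀ i, ∀ d ∈ Finset.Icc 1 D, Memℓp (a i d) (holderExponent q d))
    (b : I → 𝕜) (M : ℝ) (hM : 0 < M)
    (hfin : ∀ (ε : ℝ), 0 < ε → ∀ S : Finset I,
      ∃ x : lp (fun _ : ℕ => 𝕜) q,
        ‖x‖ ≤ M ∧ ∀ i ∈ S, ‖mulPoly D (a i) (fun j => x j) - b i‖ ≤ ε) :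
    ∃ x : lp (fun _ : ℕ => 𝕜) q,
      ‖x‖ ≤ M ∧ ∀ i : I, mulPoly D (a i) (fun j => x j) = b i :=
  multiplicative_approx_implies_exact_general D q hq I a ha b M hfin
end

section
/- Let (p,q) be a Hölder conjugate pair and let M > 0. Let a_i = (a_{i,j})_{j=1}^∞ ∈ ℓ^p for all i ∈ ℕ and let (b_i)_{i∈ℕ} be a sequence of scalars. Then the following are equivalent: (a) for every r ∈ ℕ there exists x_r ∈ ℓ^q with ‖x_r‖_q ≤ M and ∑_{j=1}^∞ a_{i,j} x_{r,j} = b_i for all i ∈ {1,…,r}; (b) for every r ∈ ℕ and all scalars h_1,…,h_r, |∑_{i=1}^r h_i b_i| ≤ M ‖∑_{i=1}^r h_i a_i‖_p; (c) there exists x ∈ ℓ^q with ‖x‖_q ≤ M and ∑_{j=1}^∞ a_{i,j} x_j = b_i for all i ∈ ℕ. -/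
open scoped ENNReal

/-- `(p, q)` is a Hölder conjugate pair: either `p > 1` and `q > 1` are (finite) real
numbers with `1/p + 1/q = 1`, or `p = 1` and `q = ∞`. -/
def IsHolderConjugatePair (p q : ℝ≥0∞) : Prop :=
  (1 < p ∧ p ≠ ∞ ∧ 1 < q ∧ q ≠ ∞ ∧ 1 / p + 1 / q = 1) ∨ (p = 1 ∧ q = ∞)

/-!
(c) ⇒ (a) is trivial. A solution `x ∈ ℓ^q` of the equations gives, by Hölder's inequality, the
functional `y ↦ ∑' j, y j * x j` on `ℓ^p` of norm at most `‖x‖_q` sending `a i` to `b i`, and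
applying it to `∑ h i • a i` yields (b). Conversely, (b) says precisely that
`∑ h i • a i ↦ ∑ h i * b i` is a well-defined functional of norm at most `M` on the span of the
`a i`; Hahn–Banach extends it to some `g` on `ℓ^p` with `‖g‖ ≤ M`. As `p < ∞`, the unit vectors
span a dense subspace, so `g y = ∑' j, y j * g (e j)`, and testing `g` against suitably normalised
finite combinations of the `e j` shows that `x j = g (e j)` lies in `ℓ^q` with `‖x‖_q ≤ ‖g‖`.
-/

namespace IsHolderConjugatePair

variable {p q : ℝ≥0∞}

theorem holderConjugate (h : IsHolderConjugatePair p q) : p.HolderConjugate q := by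
  rw [ENNReal.holderConjugate_iff]
  rcases h with ⟨-, -, -, -, h⟩ | ⟨rfl, rfl⟩
  · simpa only [one_div] using h
  · simp

theorem ne_top (h : IsHolderConjugatePair p q) : p ≠ ∞ := by
  rcases h with ⟨-, hp, -⟩ | ⟨rfl, -⟩
  exacts [hp, ENNReal.one_ne_top]

end IsHolderConjugatePair

theorem Real.HolderConjugate.le_rpow_of_le_mul_rpow_inv {p q S C : ℝ} (hpq : p.HolderConjugate q)
    (hS : 0 ≤ S) (hC : 0 ≤ C) (h : S ≤ C * S ^ p⁻¹) : S ≤ C ^ q := by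
  obtain rfl | hS := hS.eq_or_lt
  · positivity
  have hSq : S ^ q⁻¹ ≤ C := by
    refine le_of_mul_le_mul_right ?_ (Real.rpow_pos_of_pos hS p⁻¹)
    rwa [← Real.rpow_add hS, add_comm, hpq.inv_add_inv_eq_one, Real.rpow_one]
  calc S = (S ^ q⁻¹) ^ q := by
        rw [← Real.rpow_mul hS.le, inv_mul_cancel₀ hpq.symm.ne_zero, Real.rpow_one]
    _ ≤ C ^ q := by gcongr; exact hpq.symm.nonneg

section

variable {𝕜 : Type*} [RCLike 𝕜]

theorem RCLike.conj_mul_rpow_sub_two_mul_self (z : 𝕜) {r : ℝ} (hr : r ≠ 0) :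
    starRingEnd 𝕜 z * ((‖z‖ ^ (r - 2) : ℝ) : 𝕜) * z = ((‖z‖ ^ r : ℝ) : 𝕜) := by
  rw [mul_right_comm, RCLike.conj_mul, ← RCLike.ofReal_pow, ← RCLike.ofReal_mul,
    ← Real.rpow_natCast, ← Real.rpow_add' (norm_nonneg z) (by simpa using hr)]
  norm_num

theorem RCLike.norm_conj_mul_rpow_sub_two (z : 𝕜) {r : ℝ} (hr : r ≠ 1) :
    ‖starRingEnd 𝕜 z * ((‖z‖ ^ (r - 2) : ℝ) : 𝕜)‖ = ‖z‖ ^ (r - 1) := by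
  rw [norm_mul, RCLike.norm_conj, RCLike.norm_ofReal, abs_of_nonneg (by positivity)]
  conv_lhs => enter [1]; rw [← Real.rpow_one ‖z‖]
  rw [← Real.rpow_add' (norm_nonneg z) (by contrapose! hr; linarith)]
  ring_nf

end

section

variable {ι 𝕜 E : Type*} [RCLike 𝕜] [NormedAddCommGroup E] [NormedSpace 𝕜 E]

theorem norm_sum_mul_le_of_strongDual_apply_eq {v : ι → E} {b : ι → 𝕜} {M : ℝ}
    (g : StrongDual 𝕜 E) (hg : ‖g‖ ≤ M) {s : Finset ι} (hgv : ∀ i ∈ s, g (v i) = b i)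
    (c : ι → 𝕜) : ‖∑ i ∈ s, c i * b i‖ ≤ M * ‖∑ i ∈ s, c i • v i‖ := by
  have hsum : ∑ i ∈ s, c i * b i = g (∑ i ∈ s, c i • v i) := by
    simp only [map_sum, map_smul, smul_eq_mul]
    exact Finset.sum_congr rfl fun i hi => by rw [hgv i hi]
  rw [hsum]
  exact g.le_of_opNorm_le hg _

theorem exists_strongDual_apply_eq_of_norm_le {v : ι → E} {b : ι → 𝕜} {M : ℝ} (hM : 0 ≤ M)
    (h : ∀ c : ι →₀ 𝕜,
      ‖Finsupp.linearCombination 𝕜 b c‖ ≤ M * ‖Finsupp.linearCombination 𝕜 v c‖) :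
    ∃ g : StrongDual 𝕜 E, ‖g‖ ≤ M ∧ ∀ i, g (v i) = b i := by
  set L := Finsupp.linearCombination 𝕜 v
  set B := Finsupp.linearCombination 𝕜 b
  have hker : LinearMap.ker L ≤ LinearMap.ker B := fun c hc => by
    simpa [LinearMap.mem_ker.mp hc] using h c
  let φ : LinearMap.range L →ₗ[𝕜] 𝕜 :=
    (LinearMap.ker L).liftQ B hker ∘ₗ L.quotKerEquivRange.symm.toLinearMap
  have hφ (c : ι →₀ 𝕜) : φ ⟨L c, LinearMap.mem_range_self L c⟩ = B c := by
    simp [φ, LinearMap.quotKerEquivRange_symm_apply_image]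
  have hφ_le (y : LinearMap.range L) : ‖φ y‖ ≤ M * ‖y‖ := by
    obtain ⟨_, c, rfl⟩ := y
    exact (hφ c).symm ▸ h c
  obtain ⟨g, hgφ, hg⟩ := exists_extension_norm_eq _ (φ.mkContinuous M hφ_le)
  refine ⟨g, hg ▸ LinearMap.mkContinuous_norm_le φ hM hφ_le, fun i => ?_⟩
  have hi := hgφ ⟨L (Finsupp.single i 1), LinearMap.mem_range_self L _⟩
  rw [LinearMap.mkContinuous_apply, hφ] at hi
  simpa [L, B] using hi

end

theorem Finsupp.linearCombination_eq_sum_fin {R M : Type*} [Semiring R] [AddCommMonoid M]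
    [Module R M] {c : ℕ →₀ R} {r : ℕ} (hr : c.support ⊆ Finset.range r) (v : ℕ → M) :
    Finsupp.linearCombination R v c = ∑ i : Fin r, c i • v i := by
  rw [Finsupp.linearCombination_apply, Finsupp.sum_of_support_subset c hr _ (by simp),
    Fin.sum_univ_eq_sum_range (fun i => c i • v i)]

namespace lp

variable {α 𝕜 : Type*} [RCLike 𝕜] {p q : ℝ≥0∞}

theorem exists_strongDual_eq_tsum_mul [Fact (1 ≤ p)] [Fact (1 ≤ q)] [p.HolderConjugate q]
    (x : lp (fun _ : α => 𝕜) q) :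
    ∃ g : StrongDual 𝕜 (lp (fun _ : α => 𝕜) p), ‖g‖ ≤ ‖x‖ ∧ ∀ y, g y = ∑' j, y j * x j := by
  let D := dualPairing p q (fun _ : α => ContinuousLinearMap.mul 𝕜 𝕜) (K := 1)
    fun _ => ContinuousLinearMap.opNorm_mul_le 𝕜 𝕜
  refine ⟨D.flip x, ?_, fun y => rfl⟩
  have hD : ‖D.flip‖ ≤ 1 := D.opNorm_flip ▸ norm_dualPairing ..
  simpa using D.flip.le_of_opNorm_le hD x

variable [DecidableEq α]

theorem strongDual_apply_single [Fact (1 ≤ p)] (g : StrongDual 𝕜 (lp (fun _ : α => 𝕜) p))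
    (j : α) (c : 𝕜) : g (lp.single p j c) = c * g (lp.single p j 1) := by
  simpa using congrArg g (lp.single_smul (E := fun _ : α => 𝕜) p j c 1)

theorem hasSum_mul_strongDual_apply_single [Fact (1 ≤ p)] (hp : p ≠ ∞)
    (g : StrongDual 𝕜 (lp (fun _ : α => 𝕜) p)) (y : lp (fun _ : α => 𝕜) p) :
    HasSum (fun j => y j * g (lp.single p j 1)) (g y) :=
  ((lp.hasSum_single hp y).mapL g).congr_fun fun j => (strongDual_apply_single g j (y j)).symm

theorem norm_strongDual_apply_single_le [Fact (1 ≤ p)] (g : StrongDual 𝕜 (lp (fun _ : α => 𝕜) p))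
    (j : α) : ‖g (lp.single p j 1)‖ ≤ ‖g‖ := by
  simpa [lp.norm_single (zero_lt_one.trans_le Fact.out)] using g.le_opNorm (lp.single p j 1)

/-- Test `g` against `y = ∑ j ∈ s, conj (x j) * |x j|^(q-2) • e j`, for which
`g y = ∑ j ∈ s, |x j|^q = ‖y‖^p`. -/
theorem sum_norm_strongDual_apply_single_rpow_le [Fact (1 ≤ p)]
    (hpq : p.toReal.HolderConjugate q.toReal) (g : StrongDual 𝕜 (lp (fun _ : α => 𝕜) p))
    (s : Finset α) : ∑ j ∈ s, ‖g (lp.single p j 1)‖ ^ q.toReal ≤ ‖g‖ ^ q.toReal := by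
  set x : α → 𝕜 := fun j => g (lp.single p j 1)
  set u : α → 𝕜 := fun j => starRingEnd 𝕜 (x j) * ((‖x j‖ ^ (q.toReal - 2) : ℝ) : 𝕜)
  set S := ∑ j ∈ s, ‖x j‖ ^ q.toReal
  set y : lp (fun _ : α => 𝕜) p := ∑ j ∈ s, lp.single p j (u j)
  have hgy : g y = S := by
    rw [map_sum, RCLike.ofReal_sum]
    refine Finset.sum_congr rfl fun j _ => ?_
    rw [strongDual_apply_single]
    exact RCLike.conj_mul_rpow_sub_two_mul_self (x j) hpq.symm.ne_zero
  have hy : ‖y‖ ^ p.toReal = S := by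
    rw [lp.norm_sum_single hpq.pos]
    refine Finset.sum_congr rfl fun j _ => ?_
    rw [RCLike.norm_conj_mul_rpow_sub_two _ hpq.symm.lt.ne', ← Real.rpow_mul (norm_nonneg _),
      hpq.symm.sub_one_mul_conj]
  have hS : 0 ≤ S := by positivity
  refine hpq.le_rpow_of_le_mul_rpow_inv hS (norm_nonneg g) ?_
  calc S = ‖g y‖ := by rw [hgy, RCLike.norm_ofReal, abs_of_nonneg hS]
    _ ≤ ‖g‖ * ‖y‖ := g.le_opNorm y
    _ = ‖g‖ * S ^ p.toReal⁻¹ := by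
      rw [← hy, Real.rpow_rpow_inv (norm_nonneg y) hpq.pos.ne']

theorem exists_tsum_mul_eq_strongDual [Fact (1 ≤ p)] [p.HolderConjugate q] (hp : p ≠ ∞)
    (g : StrongDual 𝕜 (lp (fun _ : α => 𝕜) p)) :
    ∃ x : lp (fun _ : α => 𝕜) q, ‖x‖ ≤ ‖g‖ ∧ ∀ y, ∑' j, y j * x j = g y := by
  set x : α → 𝕜 := fun j => g (lp.single p j 1)
  suffices hx : ∃ hx : Memℓp x q, ‖(⟨x, hx⟩ : lp (fun _ : α => 𝕜) q)‖ ≤ ‖g‖ from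
    let ⟨hx, hxg⟩ := hx
    ⟨⟨x, hx⟩, hxg, fun y => (hasSum_mul_strongDual_apply_single hp g y).tsum_eq⟩
  by_cases hq : q = ∞
  · subst hq
    exact ⟨memℓp_infty ⟨‖g‖, by rintro - ⟨j, rfl⟩; exact norm_strongDual_apply_single_le g j⟩,
      lp.norm_le_of_forall_le (norm_nonneg g) (norm_strongDual_apply_single_le g)⟩
  · have hpq := ENNReal.HolderConjugate.toReal_of_ne_top hp hq
    exact ⟨memℓp_gen' (sum_norm_strongDual_apply_single_rpow_le hpq g),
      lp.norm_le_of_forall_sum_le hpq.symm.pos (norm_nonneg g)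
        (sum_norm_strongDual_apply_single_rpow_le hpq g)⟩

end lp

/-- **The Riesz/Abian–Eslami equivalence.** For a Hölder conjugate pair `(p,q)`,
`M > 0`, sequences `a i ∈ ℓ^p` and scalars `b i`, the following are equivalent:
(a) for every `r` the first `r` equations `∑' j, a i j * x j = b i` have a solution
`x ∈ ℓ^q` with `‖x‖_q ≤ M`;
(b) for every `r` and all scalars `h_1, …, h_r`,
`‖∑ i, h i * b i‖ ≤ M * ‖∑ i, h i • a i‖_p`;
(c) there exists `x ∈ ℓ^q` with `‖x‖_q ≤ M` and `∑' j, a i j * x j = b i` for all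
`i`. -/
theorem riesz_abian_eslami_tfae {𝕜 : Type*} [RCLike 𝕜] (p q : ℝ≥0∞)
    (hpq : IsHolderConjugatePair p q) (M : ℝ) (hM : 0 < M)
    (a : ℕ → lp (fun _ : ℕ => 𝕜) p) (b : ℕ → 𝕜) :
    List.TFAE
      [∀ r : ℕ, ∃ x : lp (fun _ : ℕ => 𝕜) q,
          ‖x‖ ≤ M ∧ ∀ i < r, ∑' j : ℕ, a i j * x j = b i,
        ∀ (r : ℕ) (h : Fin r → 𝕜),
          ‖∑ i : Fin r, h i * b i‖ ≤ M * ‖∑ i : Fin r, h i • a i‖,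
        ∃ x : lp (fun _ : ℕ => 𝕜) q,
          ‖x‖ ≤ M ∧ ∀ i : ℕ, ∑' j : ℕ, a i j * x j = b i] := by
  have := hpq.holderConjugate
  have : Fact (1 ≤ p) := ⟨ENNReal.HolderConjugate.one_le p q⟩
  have : Fact (1 ≤ q) := ⟨ENNReal.HolderConjugate.one_le q p⟩
  tfae_have 3 → 1 := fun ⟨x, hx, hxa⟩ _ => ⟨x, hx, fun i _ => hxa i⟩
  tfae_have 1 → 2 := by
    intro h1 r c
    obtain ⟨x, hx, hxa⟩ := h1 r
    obtain ⟨g, hg, hgx⟩ := lp.exists_strongDual_eq_tsum_mul (p := p) x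
    exact norm_sum_mul_le_of_strongDual_apply_eq (v := fun i : Fin r => a i) g (hg.trans hx)
      (fun i _ => (hgx _).trans (hxa i i.2)) c
  tfae_have 2 → 3 := by
    intro h2
    obtain ⟨g, hg, hga⟩ := exists_strongDual_apply_eq_of_norm_le (v := a) (b := b) hM.le
      fun c => by
        obtain ⟨r, hr⟩ := c.support.exists_nat_subset_range
        rw [Finsupp.linearCombination_eq_sum_fin hr, Finsupp.linearCombination_eq_sum_fin hr]
        exact h2 r fun i => c i
    obtain ⟨x, hx, hxg⟩ := lp.exists_tsum_mul_eq_strongDual (q := q) hpq.ne_top g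
    exact ⟨x, hx.trans hg, fun i => (hxg (a i)).trans (hga i)⟩
  tfae_finish
end

section
/- Let (p,q) be a Hölder conjugate pair and let a = (a_j)_{j=1}^∞ ∈ ℓ^p with a_j ≠ 0 for all j ∈ ℕ. For r ∈ ℕ let a_r^{tail} denote the sequence whose j-th term is 0 for j < r and a_j for j ≥ r. If x_r ∈ ℓ^q satisfies ∑_{j=i}^∞ a_j x_{r,j} = 1 for all i ∈ {1,…,r}, then ‖x_r‖_q ≥ 1/‖a_r^{tail}‖_p. Consequently, since lim_{r→∞} ‖a_r^{tail}‖_p = 0, any sequence (x_r)_{r=1}^∞ of solutions of the first r equations of the triangular system satisfies lim_{r→∞} ‖x_r‖_q = ∞ and is not uniformly bounded in ℓ^q. -/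
open scoped ENNReal

/-- The `ℓ^p`-norm `‖a_r^{tail}‖_p` of the tail sequence whose `j`-th term is `0` for
`j < r` and `a j` for `j ≥ r`. -/
noncomputable def tailNorm (p : ℝ≥0∞) {𝕜 : Type*} [RCLike 𝕜] (a : ℕ → 𝕜) (r : ℕ) : ℝ :=
  (∑' j : ℕ, (if r ≤ j then ‖a j‖ else 0) ^ p.toReal) ^ (1 / p.toReal)

/-!
The `r`-th equation of the system only involves the tail `a_r^{tail}`, so by Hölder's
inequality `1 ≤ ‖a_r^{tail}‖_p ‖x_r‖_q`. The tails of the convergent series `∑ |a_j|^p`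
tend to zero, which forces `‖x_r‖_q → ∞`.
-/

open Filter Topology

theorem lp.tsum_mul_le_mul_norm_one_top {ι : Type*} {E : ι → Type*}
    [∀ i, NormedAddCommGroup (E i)] (f : lp E 1) (g : lp E ∞) :
    (Summable fun i => ‖f i‖ * ‖g i‖) ∧ ∑' i, ‖f i‖ * ‖g i‖ ≤ ‖f‖ * ‖g‖ := by
  have hf : HasSum (fun i => ‖f i‖ * ‖g‖) (‖f‖ * ‖g‖) := by
    simpa using (lp.hasSum_norm (p := 1) (by simp) f).mul_right ‖g‖
  have hle (i : ι) : ‖f i‖ * ‖g i‖ ≤ ‖f i‖ * ‖g‖ := by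
    gcongr
    exact lp.norm_apply_le_norm ENNReal.top_ne_zero g i
  have hs : Summable fun i => ‖f i‖ * ‖g i‖ :=
    hf.summable.of_nonneg_of_le (fun _ => by positivity) hle
  exact ⟨hs, (hs.tsum_le_tsum hle hf.summable).trans_eq hf.tsum_eq⟩

namespace IsHolderConjugatePair

variable {p q : ℝ≥0∞}

theorem toReal_pos (hpq : IsHolderConjugatePair p q) : 0 < p.toReal := by
  rcases hpq with ⟨hp1, hp, -⟩ | ⟨rfl, -⟩
  · exact ENNReal.toReal_pos (zero_lt_one.trans hp1).ne' hp
  · simp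

theorem tsum_mul_le_mul_norm (hpq : IsHolderConjugatePair p q) {ι : Type*} {E : ι → Type*}
    [∀ i, NormedAddCommGroup (E i)] (f : lp E p) (g : lp E q) :
    (Summable fun i => ‖f i‖ * ‖g i‖) ∧ ∑' i, ‖f i‖ * ‖g i‖ ≤ ‖f‖ * ‖g‖ := by
  rcases hpq with ⟨-, hp, -, hq, hsum⟩ | ⟨rfl, rfl⟩
  · have : p.HolderConjugate q :=
      ENNReal.holderConjugate_iff.2 (by simpa only [one_div] using hsum)
    exact lp.tsum_mul_le_mul_norm (ENNReal.HolderConjugate.toReal_of_ne_top hp hq) f g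
  · exact lp.tsum_mul_le_mul_norm_one_top f g

theorem norm_tsum_mul_le (hpq : IsHolderConjugatePair p q) {ι R : Type*} [NormedRing R]
    (f : lp (fun _ : ι => R) p) (g : lp (fun _ : ι => R) q) :
    ‖∑' i, f i * g i‖ ≤ ‖f‖ * ‖g‖ :=
  let ⟨hs, hle⟩ := hpq.tsum_mul_le_mul_norm f g
  (tsum_of_norm_bounded hs.hasSum fun _ => norm_mul_le _ _).trans hle

end IsHolderConjugatePair

theorem tsum_ite_le_eq_tsum_nat_add {M : Type*} [AddCommMonoid M] [TopologicalSpace M]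
    (f : ℕ → M) (r : ℕ) : ∑' j, (if r ≤ j then f j else 0) = ∑' k, f (k + r) := by
  rw [← (add_left_injective r).tsum_eq]
  · simp
  · intro j hj
    exact ⟨j - r, Nat.sub_add_cancel (by by_contra h; simp [h] at hj)⟩

theorem tendsto_tsum_ite_le_atTop_zero {G : Type*} [AddCommGroup G] [TopologicalSpace G]
    [IsTopologicalAddGroup G] [T2Space G] (f : ℕ → G) :
    Tendsto (fun r => ∑' j, if r ≤ j then f j else 0) atTop (𝓝 0) := by
  simpa only [tsum_ite_le_eq_tsum_nat_add] using tendsto_sum_nat_add f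

theorem Memℓp.ite_le {E : Type*} [NormedAddCommGroup E] {p : ℝ≥0∞} {a : ℕ → E}
    (ha : Memℓp a p) (r : ℕ) : Memℓp (fun j => if r ≤ j then a j else 0) p :=
  ha.mono' fun j => by split_ifs <;> simp

section tailNorm

variable {𝕜 : Type*} [RCLike 𝕜] {p : ℝ≥0∞}

theorem tailNorm_eq_norm (hp : 0 < p.toReal) {a : ℕ → 𝕜} (ha : Memℓp a p) (r : ℕ) :
    tailNorm p a r = ‖(⟨_, ha.ite_le r⟩ : lp (fun _ : ℕ => 𝕜) p)‖ := by
  rw [lp.norm_eq_tsum_rpow hp, tailNorm]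
  simp only [apply_ite norm, norm_zero]

theorem tendsto_tailNorm_atTop_zero (hp : 0 < p.toReal) (a : ℕ → 𝕜) :
    Tendsto (tailNorm p a) atTop (𝓝 0) := by
  have h := (tendsto_tsum_ite_le_atTop_zero fun j => ‖a j‖ ^ p.toReal).rpow_const
    (Or.inr (by positivity : 0 ≤ 1 / p.toReal))
  rw [Real.zero_rpow (by positivity)] at h
  refine h.congr fun r => ?_
  simp only [tailNorm, apply_ite (· ^ p.toReal), Real.zero_rpow hp.ne']

theorem IsHolderConjugatePair.one_le_tailNorm_mul_norm {q : ℝ≥0∞}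
    (hpq : IsHolderConjugatePair p q) {a : ℕ → 𝕜} (ha : Memℓp a p) {r : ℕ}
    {x : lp (fun _ : ℕ => 𝕜) q} (hx : ∑' j, (if r ≤ j then a j * x j else 0) = 1) :
    1 ≤ tailNorm p a r * ‖x‖ := by
  set b : lp (fun _ : ℕ => 𝕜) p := ⟨_, ha.ite_le r⟩
  calc (1 : ℝ) = ‖∑' j, b j * x j‖ := by
        rw [← norm_one (α := 𝕜), ← hx]
        congr 1
        exact tsum_congr fun j => by split_ifs <;> simp [b, *]
    _ ≤ ‖b‖ * ‖x‖ := hpq.norm_tsum_mul_le b x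
    _ = tailNorm p a r * ‖x‖ := by rw [tailNorm_eq_norm hpq.toReal_pos ha]

end tailNorm

theorem inv_le_of_one_le_mul_of_nonneg {u v : ℝ} (hu : 0 ≤ u) (h : 1 ≤ u * v) : u⁻¹ ≤ v := by
  rcases hu.eq_or_lt with rfl | hu
  · exact absurd h (by simp)
  · rwa [inv_le_iff_one_le_mul₀ hu, mul_comm]

theorem tendsto_atTop_of_one_le_mul {α : Type*} {l : Filter α} {u v : α → ℝ}
    (hu : Tendsto u l (𝓝 0)) (hu0 : ∀ n, 0 ≤ u n) (h : ∀ n, 1 ≤ u n * v n) :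
    Tendsto v l atTop := by
  have hpos (n : α) : 0 < u n :=
    (hu0 n).lt_of_ne fun h0 => by linarith [h0 ▸ h n]
  refine tendsto_atTop_mono (fun n => inv_le_of_one_le_mul_of_nonneg (hu0 n) (h n)) ?_
  exact (tendsto_nhdsWithin_iff.2 ⟨hu, .of_forall hpos⟩).inv_tendsto_nhdsGT_zero

theorem helly_solutions_unbounded_general {𝕜 : Type*} [RCLike 𝕜] (p q : ℝ≥0∞)
    (hpq : IsHolderConjugatePair p q)
    (a : ℕ → 𝕜) (ha : Memℓp a p) :
    (∀ (r : ℕ) (x : lp (fun _ : ℕ => 𝕜) q),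
      (∀ i ≤ r, ∑' j : ℕ, (if i ≤ j then a j * x j else 0) = 1) →
      (tailNorm p a r)⁻¹ ≤ ‖x‖) ∧
    Filter.Tendsto (fun r : ℕ => tailNorm p a r) Filter.atTop (nhds 0) ∧
    (∀ xs : ℕ → lp (fun _ : ℕ => 𝕜) q,
      (∀ r : ℕ, ∀ i ≤ r, ∑' j : ℕ, (if i ≤ j then a j * xs r j else 0) = 1) →
      Filter.Tendsto (fun r : ℕ => ‖xs r‖) Filter.atTop Filter.atTop) := by
  have hnonneg (r : ℕ) : 0 ≤ tailNorm p a r := by unfold tailNorm; positivity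
  have htail := tendsto_tailNorm_atTop_zero hpq.toReal_pos a
  refine ⟨fun r x hx => ?_, htail, fun xs hxs => ?_⟩
  · exact inv_le_of_one_le_mul_of_nonneg (hnonneg r)
      (hpq.one_le_tailNorm_mul_norm ha (hx r le_rfl))
  · exact tendsto_atTop_of_one_le_mul htail hnonneg fun r =>
      hpq.one_le_tailNorm_mul_norm ha (hxs r r le_rfl)

/-- Any `x ∈ ℓ^q` solving the first `r` equations `∑_{j ≥ i} a j * x j = 1`
(`i ≤ r`) of the triangular system satisfies `‖x‖_q ≥ 1/‖a_r^{tail}‖_p`.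
Consequently, since `‖a_r^{tail}‖_p → 0`, any sequence `(x_r)` of such solutions
satisfies `‖x_r‖_q → ∞`, so it is not uniformly bounded in `ℓ^q`. -/
theorem helly_solutions_unbounded {𝕜 : Type*} [RCLike 𝕜] (p q : ℝ≥0∞)
    (hpq : IsHolderConjugatePair p q)
    (a : ℕ → 𝕜) (ha : Memℓp a p) (ha0 : ∀ j, a j ≠ 0) :
    (∀ (r : ℕ) (x : lp (fun _ : ℕ => 𝕜) q),
      (∀ i ≤ r, ∑' j : ℕ, (if i ≤ j then a j * x j else 0) = 1) →
      (tailNorm p a r)⁻¹ ≤ ‖x‖) ∧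
    Filter.Tendsto (fun r : ℕ => tailNorm p a r) Filter.atTop (nhds 0) ∧
    (∀ xs : ℕ → lp (fun _ : ℕ => 𝕜) q,
      (∀ r : ℕ, ∀ i ≤ r, ∑' j : ℕ, (if i ≤ j then a j * xs r j else 0) = 1) →
      Filter.Tendsto (fun r : ℕ => ‖xs r‖) Filter.atTop Filter.atTop) :=
  helly_solutions_unbounded_general p q hpq a ha
end
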